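/- arXiv:1506.04339 — 2 statements merged into one kernel-verified Lean document; each statement's English description precedes it below -/
import Mathlib

section
/- Consider the Lie algebra relations of Heisenberg type [X₊, X₋] = −2X₃, where X₊ = X₁+X₂, X₋ = X₁−X₂ and X₃ is central, and for s > 0 the six vectors Z₀ = −X₊ − 2sX₃, Z₁ = −X₋ − 2sX₃, Z₂ = X₊, Z₃ = X₋, Z₄ = −X₊ − 2sX₃, Z₅ = −X₋ − 2sX₃. Define σ_{il} = ⟨λ, [Z_i, Z_l]⟩, where ⟨λ, X₃⟩ = −1 and λ is arbitrary but fixed on span(X₊, X₋). Let W = {α ∈ ℝ⁶ : Σαᵢ = 0, Σαᵢ Zᵢ = 0 in span(X₊, X₋, X₃)}, parametrized by (α₀, α₁, α₂) via α₃ = −α₂, α₄ = −α₀+α₂, α₅ = −α₁−α₂. Then on W the quadratic form Q(α) = Σ_{0≤i<l≤5} αᵢα_l σ_{il} equals 4α₀α₁ + 4α₀α₂ − 4α₂², and Q is not negative semidefinite; for example, Q at (α₀,α₁,α₂) = (1,1,0) equals 4 > 0. -/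
set_option maxRecDepth 8000

open Finset

/-- Coordinates of an element `a X₊ + b X₋ + c X₃` of the Heisenberg Lie algebra
in the basis (X₊, X₋, X₃), where X₊ = X₁+X₂, X₋ = X₁−X₂ and X₃ = [X₁,X₂] is central,
so that [X₊, X₋] = −2X₃. -/
def brk (v w : ℝ × ℝ × ℝ) : ℝ × ℝ × ℝ := (0, 0, -2 * (v.1 * w.2.1 - w.1 * v.2.1))

/-- The pairing with the covector λ, with ⟨λ, X₊⟩ = la, ⟨λ, X₋⟩ = lb, ⟨λ, X₃⟩ = −1. -/
def pairing (la lb : ℝ) (v : ℝ × ℝ × ℝ) : ℝ := la * v.1 + lb * v.2.1 + (-1) * v.2.2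

/-- The six vectors Z₀, …, Z₅ (in (X₊, X₋, X₃)-coordinates) arising from a
regular bang-bang Heisenberg extremal with 6 bang arcs of interior length s. -/
def Z (s : ℝ) : Fin 6 → ℝ × ℝ × ℝ :=
  ![(-1, 0, -2 * s), (0, -1, -2 * s), (1, 0, 0), (0, 1, 0), (-1, 0, -2 * s), (0, -1, -2 * s)]

/-- The Agrachev–Gamkrelidze quadratic form Q(α) = Σ_{i<l} αᵢ α_l ⟨λ, [Zᵢ, Z_l]⟩. -/
def Q (s la lb : ℝ) (α : Fin 6 → ℝ) : ℝ :=
  ∑ i : Fin 6, ∑ l : Fin 6,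
    if i < l then α i * α l * pairing la lb (brk (Z s i) (Z s l)) else 0

lemma vec6_five {α : Type*} (a b c d e f : α) : ![a, b, c, d, e, f] 5 = f := rfl

lemma vec6_two {α : Type*} (a b c d e f : α) : ![a, b, c, d, e, f] 2 = c := rfl

lemma vec6_three {α : Type*} (a b c d e f : α) : ![a, b, c, d, e, f] 3 = d := rfl

lemma vec6_four {α : Type*} (a b c d e f : α) : ![a, b, c, d, e, f] 4 = e := rfl

lemma Q_eval (s la lb : ℝ) (α : Fin 6 → ℝ) :
    Q s la lb α = 2 * (α 0 * α 1 - α 0 * α 3 + α 0 * α 5 + α 1 * α 2 - α 1 * α 4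
      + α 2 * α 3 - α 2 * α 5 + α 3 * α 4 + α 4 * α 5) := by
  simp only [Q, Fin.sum_univ_six]
  norm_num [Z, pairing, brk, vec6_five, vec6_two, vec6_three, vec6_four,
    (by decide : ((0:Fin 6) < 1)), (by decide : ((0:Fin 6) < 2)),
    (by decide : ((0:Fin 6) < 3)), (by decide : ((0:Fin 6) < 4)),
    (by decide : ((0:Fin 6) < 5)), (by decide : ((1:Fin 6) < 2)),
    (by decide : ((1:Fin 6) < 3)), (by decide : ((1:Fin 6) < 4)),
    (by decide : ((1:Fin 6) < 5)), (by decide : ((2:Fin 6) < 3)),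
    (by decide : ((2:Fin 6) < 4)), (by decide : ((2:Fin 6) < 5)),
    (by decide : ((3:Fin 6) < 4)), (by decide : ((3:Fin 6) < 5)),
    (by decide : ((4:Fin 6) < 5)),
    (by decide : ¬((1:Fin 6) < 0)), (by decide : ¬((2:Fin 6) < 0)),
    (by decide : ¬((2:Fin 6) < 1)), (by decide : ¬((3:Fin 6) < 0)),
    (by decide : ¬((3:Fin 6) < 1)), (by decide : ¬((3:Fin 6) < 2)),
    (by decide : ¬((4:Fin 6) < 0)), (by decide : ¬((4:Fin 6) < 1)),
    (by decide : ¬((4:Fin 6) < 2)), (by decide : ¬((4:Fin 6) < 3)),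
    (by decide : ¬((5:Fin 6) < 0)), (by decide : ¬((5:Fin 6) < 1)),
    (by decide : ¬((5:Fin 6) < 2)), (by decide : ¬((5:Fin 6) < 3)),
    (by decide : ¬((5:Fin 6) < 4)),
    (by decide : ¬((0:Fin 6) = 1)), (by decide : ¬((0:Fin 6) = 2)),
    (by decide : ¬((0:Fin 6) = 3)), (by decide : ¬((0:Fin 6) = 4)),
    (by decide : ¬((0:Fin 6) = 5)), (by decide : ¬((1:Fin 6) = 0)),
    (by decide : ¬((2:Fin 6) = 0)), (by decide : ¬((3:Fin 6) = 0)),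
    (by decide : ¬((4:Fin 6) = 0)), (by decide : ¬((5:Fin 6) = 0)),
    (by decide : ¬((1:Fin 6) = 2)), (by decide : ¬((2:Fin 6) = 1)),
    (by decide : ¬((3:Fin 6) = 4)), (by decide : ¬((4:Fin 6) = 3))]
  ring

theorem heisenberg_second_order_form
    (s : ℝ) (hs : 0 < s) (la lb : ℝ) :
    (∀ α₀ α₁ α₂ : ℝ,
        (∑ i : Fin 6, (![α₀, α₁, α₂, -α₂, -α₀ + α₂, -α₁ - α₂]) i = 0) ∧
        (∑ i : Fin 6, (![α₀, α₁, α₂, -α₂, -α₀ + α₂, -α₁ - α₂]) i • Z s i = (0 : ℝ × ℝ × ℝ)) ∧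
        Q s la lb ![α₀, α₁, α₂, -α₂, -α₀ + α₂, -α₁ - α₂] =
          4 * α₀ * α₁ + 4 * α₀ * α₂ - 4 * α₂ ^ 2) ∧
    Q s la lb ![1, 1, 0, 0, -1, -1] = 4 ∧ (0 : ℝ) < 4 := by
  refine ⟨fun α₀ α₁ α₂ => ⟨?_, ?_, ?_⟩, ?_, by norm_num⟩
  · simp [Fin.sum_univ_six, vec6_five]; ring
  · simp [Fin.sum_univ_six, Z, Prod.ext_iff, Prod.smul_def, smul_eq_mul, vec6_five, vec6_two, vec6_three, vec6_four]
    ring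
  · rw [Q_eval]; simp [vec6_five]; ring
  · rw [Q_eval]; norm_num [vec6_five, vec6_two, vec6_three, vec6_four]
end

section
/- Let γ be a bang-bang extremal of the Heisenberg sub-ℓ^∞ problem whose switching functions satisfy φ₃ ≡ a ≠ 0. Then every interior bang arc (one that starts and ends at a switching time) has duration exactly s = (φ₁(t₀) + φ₂(t₀))/|a| = λ₀/|a|, where λ₀ = |φ₁| + |φ₂| is the constant value of the maximized Hamiltonian; in particular all interior arcs have equal length. -/
/-!
On an interior bang arc neither switching function changes sign, so both controls are constant
and `φ₁`, `φ₂` are affine with slopes of modulus `|a|`. The switching function vanishing at the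
start therefore cannot vanish at the end; the other one runs from `±λ₀` (by `|φ₁| + |φ₂| = λ₀`)
down to `0` at speed `|a|`, which takes time `λ₀ / |a|`.
-/

open MeasureTheory Set intervalIntegral

lemma IsPreconnected.sign_eq_one_or_sign_eq_neg_one {α : Type*} [TopologicalSpace α]
    {S : Set α} {ψ : α → ℝ} (hS : IsPreconnected S) (hψ : ContinuousOn ψ S)
    (hψ0 : ∀ x ∈ S, ψ x ≠ 0) :
    (∀ x ∈ S, Real.sign (ψ x) = 1) ∨ (∀ x ∈ S, Real.sign (ψ x) = -1) := by
  rcases hS.eq_or_eq_neg_of_sq_eq hψ hψ.abs (fun x _ => by simp [sq_abs])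
      (fun hx => abs_ne_zero.2 (hψ0 _ hx)) with h | h
  · exact .inl fun x hx => by rw [h hx, Real.sign_of_pos (abs_pos.2 (hψ0 x hx))]
  · exact .inr fun x hx => by
      rw [h hx, Pi.neg_apply, Real.sign_of_neg (neg_neg_of_pos (abs_pos.2 (hψ0 x hx)))]

lemma intervalIntegrable_of_eqOn_sign {u ψ : ℝ → ℝ} {τ τ' : ℝ} (h : τ ≤ τ')
    (hu : Measurable u) (huψ : ∀ t ∈ Ioo τ τ', u t = Real.sign (ψ t)) :
    IntervalIntegrable u volume τ τ' := by
  rw [intervalIntegrable_iff_integrableOn_Ioo_of_le h]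
  refine Measure.integrableOn_of_bounded (M := 1) measure_Ioo_lt_top.ne hu.aestronglyMeasurable
    (ae_restrict_of_forall_mem measurableSet_Ioo fun t ht => ?_)
  rw [huψ t ht]
  rcases Real.sign_apply_eq (ψ t) with h | h | h <;> simp [h]

lemma continuousOn_of_forall_eq_add_integral {φ f : ℝ → ℝ} {τ τ' : ℝ}
    (hf : IntervalIntegrable f volume τ τ') (hφ : ∀ t, φ t = φ τ + ∫ r in τ..t, f r) :
    ContinuousOn φ (uIcc τ τ') :=
  (continuousOn_const.add (continuousOn_primitive_interval' hf left_mem_uIcc)).congr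
    fun t _ => hφ t

lemma abs_sub_eq_of_eqOn_sign {φ ψ u : ℝ → ℝ} {c τ τ' : ℝ} (h : τ ≤ τ')
    (hφ : φ τ' = φ τ + ∫ r in τ..τ', u r * c)
    (hψ : ContinuousOn ψ (Ioo τ τ')) (hψ0 : ∀ t ∈ Ioo τ τ', ψ t ≠ 0)
    (huψ : ∀ t ∈ Ioo τ τ', u t = Real.sign (ψ t)) :
    |φ τ' - φ τ| = |c| * (τ' - τ) := by
  obtain ⟨ε, hε, hu⟩ : ∃ ε : ℝ, |ε| = 1 ∧ ∀ t ∈ Ioo τ τ', u t = ε := by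
    rcases isPreconnected_Ioo.sign_eq_one_or_sign_eq_neg_one hψ hψ0 with hs | hs
    · exact ⟨1, by simp, fun t ht => (huψ t ht).trans (hs t ht)⟩
    · exact ⟨-1, by simp, fun t ht => (huψ t ht).trans (hs t ht)⟩
  have hint : ∫ r in τ..τ', u r * c = ∫ _ in τ..τ', ε * c := by
    simp only [integral_of_le h, integral_Ioc_eq_integral_Ioo]
    exact setIntegral_congr_fun measurableSet_Ioo fun t ht => by rw [hu t ht]
  rw [hφ, hint, intervalIntegral.integral_const, smul_eq_mul, add_sub_cancel_left, abs_mul,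
    abs_mul, hε, abs_of_nonneg (sub_nonneg.2 h)]
  ring

theorem heisenberg_interior_bang_arc_length_general
    (a lam₀ τ τ' : ℝ) (ha : a ≠ 0) (hττ' : τ < τ')
    (φ₁ φ₂ φ₃ u₁ u₂ : ℝ → ℝ)
    (hm₁ : Measurable u₁) (hm₂ : Measurable u₂)
    (hsign₁ : ∀ t, φ₁ t ≠ 0 → u₁ t = Real.sign (φ₁ t))
    (hsign₂ : ∀ t, φ₂ t ≠ 0 → u₂ t = Real.sign (φ₂ t))
    -- switching ODEs in integral form, φ₃ ≡ a
    (hφ₁ : ∀ s t : ℝ, φ₁ t = φ₁ s + ∫ r in s..t, -(u₂ r * φ₃ r))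
    (hφ₂ : ∀ s t : ℝ, φ₂ t = φ₂ s + ∫ r in s..t, u₁ r * φ₃ r)
    (hφ₃ : ∀ t, φ₃ t = a)
    -- the maximized Hamiltonian is constant: |φ₁| + |φ₂| ≡ lam₀
    (hmax : ∀ t, |φ₁ t| + |φ₂ t| = lam₀)
    -- [τ, τ'] is an interior bang arc: it starts and ends at switching times
    -- and contains no switching time in its interior
    (hstart : φ₁ τ = 0 ∨ φ₂ τ = 0)
    (hend : φ₁ τ' = 0 ∨ φ₂ τ' = 0)
    (hreg : ∀ t ∈ Ioo τ τ', φ₁ t ≠ 0 ∧ φ₂ t ≠ 0) :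
    τ' - τ = lam₀ / |a| := by
  have hφ₁' : ∀ s t, φ₁ t = φ₁ s + ∫ r in s..t, u₂ r * -a := by
    simpa only [hφ₃, mul_neg] using hφ₁
  have hφ₂' : ∀ s t, φ₂ t = φ₂ s + ∫ r in s..t, u₁ r * a := by simpa only [hφ₃] using hφ₂
  have hu₁ : ∀ t ∈ Ioo τ τ', u₁ t = Real.sign (φ₁ t) := fun t ht => hsign₁ t (hreg t ht).1
  have hu₂ : ∀ t ∈ Ioo τ τ', u₂ t = Real.sign (φ₂ t) := fun t ht => hsign₂ t (hreg t ht).2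
  have hIoo : Ioo τ τ' ⊆ uIcc τ τ' := uIcc_of_le hττ'.le ▸ Ioo_subset_Icc_self
  have hc₁ : ContinuousOn φ₁ (Ioo τ τ') := (continuousOn_of_forall_eq_add_integral
    ((intervalIntegrable_of_eqOn_sign hττ'.le hm₂ hu₂).mul_const _) (hφ₁' τ)).mono hIoo
  have hc₂ : ContinuousOn φ₂ (Ioo τ τ') := (continuousOn_of_forall_eq_add_integral
    ((intervalIntegrable_of_eqOn_sign hττ'.le hm₁ hu₁).mul_const _) (hφ₂' τ)).mono hIoo
  have hinc₁ : |φ₁ τ' - φ₁ τ| = |a| * (τ' - τ) := by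
    simpa only [abs_neg] using abs_sub_eq_of_eqOn_sign hττ'.le (hφ₁' τ τ') hc₂
      (fun t ht => (hreg t ht).2) hu₂
  have hinc₂ : |φ₂ τ' - φ₂ τ| = |a| * (τ' - τ) :=
    abs_sub_eq_of_eqOn_sign hττ'.le (hφ₂' τ τ') hc₁ (fun t ht => (hreg t ht).1) hu₁
  have hpos : 0 < |a| * (τ' - τ) := mul_pos (abs_pos.2 ha) (sub_pos.2 hττ')
  rw [eq_div_iff (abs_ne_zero.2 ha), ← hmax τ]
  rcases hstart with h | h <;> rcases hend with h' | h' <;>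
    simp only [h, h', sub_self, zero_sub, sub_zero, abs_neg, abs_zero] at hinc₁ hinc₂ ⊢ <;>
    linarith

theorem heisenberg_interior_bang_arc_length
    (a lam₀ τ τ' : ℝ) (ha : a ≠ 0) (hττ' : τ < τ')
    (φ₁ φ₂ φ₃ u₁ u₂ : ℝ → ℝ)
    (hu₁b : ∀ t, |u₁ t| ≤ 1) (hu₂b : ∀ t, |u₂ t| ≤ 1)
    (hm₁ : Measurable u₁) (hm₂ : Measurable u₂)
    (hsign₁ : ∀ t, φ₁ t ≠ 0 → u₁ t = Real.sign (φ₁ t))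
    (hsign₂ : ∀ t, φ₂ t ≠ 0 → u₂ t = Real.sign (φ₂ t))
    -- switching ODEs in integral form, φ₃ ≡ a
    (hφ₁ : ∀ s t : ℝ, φ₁ t = φ₁ s + ∫ r in s..t, -(u₂ r * φ₃ r))
    (hφ₂ : ∀ s t : ℝ, φ₂ t = φ₂ s + ∫ r in s..t, u₁ r * φ₃ r)
    (hφ₃ : ∀ t, φ₃ t = a)
    -- the maximized Hamiltonian is constant: |φ₁| + |φ₂| ≡ lam₀
    (hmax : ∀ t, |φ₁ t| + |φ₂ t| = lam₀)
    -- [τ, τ'] is an interior bang arc: it starts and ends at switching times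
    -- and contains no switching time in its interior
    (hstart : φ₁ τ = 0 ∨ φ₂ τ = 0)
    (hend : φ₁ τ' = 0 ∨ φ₂ τ' = 0)
    (hreg : ∀ t ∈ Ioo τ τ', φ₁ t ≠ 0 ∧ φ₂ t ≠ 0) :
    τ' - τ = lam₀ / |a| :=
  heisenberg_interior_bang_arc_length_general a lam₀ τ τ' ha hττ' φ₁ φ₂ φ₃ u₁ u₂ hm₁ hm₂ hsign₁
    hsign₂ hφ₁ hφ₂ hφ₃ hmax hstart hend hreg
end
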